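/- Let R be a principal ideal domain and M a free R-module of finite rank n. If u : M → M is an R-linear endomorphism whose image u(M) is also free of rank n, then the Fitting ideal of the quotient M/u(M) (the ideal generated by the product of its invariant factors) equals the ideal generated by det(u). -/

import Mathlib

/-!
A Smith basis for `u(M) ⊆ M` gives `det u ~ ∏ cᵢ` and `M ⧸ u(M) ≅ Π R ⧸ (cᵢ)` with all `cᵢ ≠ 0`,
so it suffices to see that `∏ aᵢ` is, up to a unit, an isomorphism invariant of
`T = Π R ⧸ (aᵢ)` when `∏ aᵢ ≠ 0`. For a prime `p`, the number `m` of indices with `p ∣ aᵢ` is the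
length of `T ⧸ pT`, and `T ⧸ T[p] ≅ Π R ⧸ (aᵢ')`, where `aᵢ'` is `aᵢ` with one factor `p` removed
when `p ∣ aᵢ`. Since `∏ aᵢ = pᵐ ∏ aᵢ'`, induction along strict divisibility concludes.
-/

open Module Submodule Pointwise

section Quotient
variable {R : Type*} [CommRing R]

theorem Ideal.Quotient.smul_top_eq_map_mkQ (p a : R) :
    (p • ⊤ : Submodule R (R ⧸ Ideal.span {a})) =
      Submodule.map (Ideal.span {a}).mkQ (Ideal.span {p}) := by
  rw [Ideal.Quotient.smul_top, Ideal.span, Submodule.map_span, Set.image_singleton]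
  rfl

noncomputable def QuotSMulTop.quotientSpanSingletonEquiv (p a : R) :
    QuotSMulTop p (R ⧸ Ideal.span {a}) ≃ₗ[R] R ⧸ (Ideal.span {a} ⊔ Ideal.span {p}) :=
  (quotEquivOfEq _ _ (Ideal.Quotient.smul_top_eq_map_mkQ p a)).trans
    (quotientQuotientEquivQuotientSup _ _)

noncomputable def QuotSMulTop.piEquiv {ι : Type*} [Fintype ι] [DecidableEq ι] (p : R)
    (X : ι → Type*) [∀ i, AddCommGroup (X i)] [∀ i, Module R (X i)] :
    QuotSMulTop p (Π i, X i) ≃ₗ[R] Π i, QuotSMulTop p (X i) :=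
  (QuotSMulTop.equivQuotTensor p _).trans <|
    (TensorProduct.piRight R R _ X).trans <|
      LinearEquiv.piCongrRight fun i => (QuotSMulTop.equivQuotTensor p (X i)).symm

theorem ker_torsionBy_mkQ_comp_mkQ {p a b : R} (h : ∀ y, a ∣ p * y ↔ b ∣ y) :
    LinearMap.ker ((torsionBy R (R ⧸ Ideal.span {a}) p).mkQ ∘ₗ (Ideal.span {a}).mkQ) =
      Ideal.span {b} := by
  ext y
  simp [mem_torsionBy_iff, Algebra.smul_def, ← map_mul, Ideal.Quotient.eq_zero_iff_mem,
    Ideal.mem_span_singleton, h]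

noncomputable def quotTorsionByQuotientEquiv {p a b : R} (h : ∀ y, a ∣ p * y ↔ b ∣ y) :
    ((R ⧸ Ideal.span {a}) ⧸ torsionBy R (R ⧸ Ideal.span {a}) p) ≃ₗ[R] R ⧸ Ideal.span {b} :=
  ((quotEquivOfEq _ _ (ker_torsionBy_mkQ_comp_mkQ h).symm).trans
    (LinearMap.quotKerEquivOfSurjective _ ((mkQ_surjective _).comp (mkQ_surjective _)))).symm

theorem Submodule.torsionBy_pi {ι : Type*} (X : ι → Type*) [∀ i, AddCommGroup (X i)]
    [∀ i, Module R (X i)] (p : R) :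
    torsionBy R (Π i, X i) p = pi Set.univ fun i => torsionBy R (X i) p := by
  ext x
  simp [mem_torsionBy_iff, funext_iff]

noncomputable def quotTorsionByPiQuotientEquiv {ι : Type*} [Fintype ι] [DecidableEq ι]
    {p : R} {a b : ι → R} (h : ∀ i y, a i ∣ p * y ↔ b i ∣ y) :
    ((Π i, R ⧸ Ideal.span {a i}) ⧸ torsionBy R (Π i, R ⧸ Ideal.span {a i}) p) ≃ₗ[R]
      Π i, R ⧸ Ideal.span {b i} :=
  (quotEquivOfEq _ _ (Submodule.torsionBy_pi _ p)).trans <|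
    (quotientPi _).trans <| LinearEquiv.piCongrRight fun i => quotTorsionByQuotientEquiv (h i)

theorem LinearEquiv.map_torsionBy {X Y : Type*} [AddCommGroup X] [Module R X] [AddCommGroup Y]
    [Module R Y] (e : X ≃ₗ[R] Y) (p : R) :
    (torsionBy R X p).map (e : X →ₗ[R] Y) = torsionBy R Y p := by
  ext y
  rw [mem_map_equiv, mem_torsionBy_iff, mem_torsionBy_iff, ← map_smul,
    LinearEquiv.map_eq_zero_iff]

theorem subsingleton_pi_quotient_iff {ι : Type*} [Fintype ι] (a : ι → R) :
    Subsingleton (Π i, R ⧸ Ideal.span {a i}) ↔ IsUnit (∏ i, a i) := by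
  rw [← Module.annihilator_eq_top_iff (R := R), Module.annihilator_pi]
  simp [Ideal.annihilator_quotient, IsUnit.prod_iff, Ideal.span_singleton_eq_top]

end Quotient

section Divisibility
variable {α : Type*} [CommMonoidWithZero α]

open scoped Classical in
theorem exists_eq_ite_dvd_mul (p x : α) : ∃ y, x = (if p ∣ x then p else 1) * y := by
  split_ifs with h
  exacts [h, ⟨x, (one_mul x).symm⟩]

open scoped Classical in
theorem prod_eq_pow_card_mul_prod {ι : Type*} [Fintype ι] {p : α} {a b : ι → α}
    (h : ∀ i, a i = (if p ∣ a i then p else 1) * b i) :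
    ∏ i, a i = p ^ (Finset.univ.filter fun i => p ∣ a i).card * ∏ i, b i := by
  rw [Finset.prod_congr rfl fun i _ => h i, Finset.prod_mul_distrib, Finset.prod_ite,
    Finset.prod_const, Finset.prod_const_one, mul_one]

end Divisibility

section PID
variable {R : Type*} [CommRing R] [IsDomain R] [IsPrincipalIdealRing R]

open scoped Classical in
theorem Prime.dvd_mul_iff_of_eq_ite_mul {p x y : R} (hp : Prime p)
    (h : x = (if p ∣ x then p else 1) * y) (z : R) : x ∣ p * z ↔ y ∣ z := by
  split_ifs at h with hpx
  · rw [h, mul_dvd_mul_iff_left hp.ne_zero]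
  · rw [h, one_mul] at hpx ⊢
    exact ⟨(hp.coprime_iff_not_dvd.mpr hpx).symm.dvd_of_dvd_mul_left, fun h => h.mul_left p⟩

open scoped Classical in
theorem length_quotSMulTop_quotient {p : R} (hp : Prime p) (a : R) :
    Module.length R (QuotSMulTop p (R ⧸ Ideal.span {a})) = if p ∣ a then 1 else 0 := by
  rw [(QuotSMulTop.quotientSpanSingletonEquiv p a).length_eq]
  split_ifs with h
  · rw [sup_eq_right.mpr (Ideal.span_singleton_le_span_singleton.mpr h)]
    have := isSimpleModule_iff_isCoatom.mpr
      (PrincipalIdealRing.isMaximal_of_irreducible hp.irreducible).out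
    exact Module.length_eq_one _ _
  · rw [Module.length_eq_zero_iff, Ideal.Quotient.subsingleton_iff, Ideal.sup_eq_top_iff_isCoprime]
    exact (hp.coprime_iff_not_dvd.mpr h).symm

open scoped Classical in
theorem length_quotSMulTop_pi_quotient {ι : Type*} [Fintype ι] {p : R} (hp : Prime p)
    (a : ι → R) :
    Module.length R (QuotSMulTop p (Π i, R ⧸ Ideal.span {a i})) =
      (Finset.univ.filter fun i => p ∣ a i).card := by
  rw [(QuotSMulTop.piEquiv p _).length_eq, Module.length_pi_of_fintype]
  simp [length_quotSMulTop_quotient hp]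

open scoped Classical in
theorem card_filter_dvd_eq_of_linearEquiv {ι κ : Type*} [Fintype ι] [Fintype κ] {p : R}
    (hp : Prime p) {a : ι → R} {c : κ → R}
    (e : (Π i, R ⧸ Ideal.span {a i}) ≃ₗ[R] Π j, R ⧸ Ideal.span {c j}) :
    (Finset.univ.filter fun i => p ∣ a i).card = (Finset.univ.filter fun j => p ∣ c j).card := by
  have := (QuotSMulTop.congr p e).length_eq
  rwa [length_quotSMulTop_pi_quotient hp, length_quotSMulTop_pi_quotient hp, Nat.cast_inj] at this

theorem associated_prod_of_linearEquiv_pi_quotient {ι κ : Type*} [Fintype ι] [Fintype κ]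
    {a : ι → R} {c : κ → R} (ha : ∏ i, a i ≠ 0)
    (e : (Π i, R ⧸ Ideal.span {a i}) ≃ₗ[R] Π j, R ⧸ Ideal.span {c j}) :
    Associated (∏ i, a i) (∏ j, c j) := by
  classical
  generalize hx : ∏ i, a i = x at ha
  induction x using (wellFounded_dvdNotUnit (α := R)).induction generalizing a c with
  | h x ih =>
  subst hx
  by_cases hu : IsUnit (∏ i, a i)
  · have hc : IsUnit (∏ j, c j) := (subsingleton_pi_quotient_iff c).mp <|
      e.toEquiv.subsingleton_congr.mp ((subsingleton_pi_quotient_iff a).mpr hu)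
    exact (associated_one_iff_isUnit.mpr hu).trans (associated_one_iff_isUnit.mpr hc).symm
  obtain ⟨p, hp, hpa⟩ := WfDvdMonoid.exists_irreducible_factor hu ha
  replace hp := hp.prime
  choose b hb using fun i => exists_eq_ite_dvd_mul p (a i)
  choose d hd using fun j => exists_eq_ite_dvd_mul p (c j)
  have hcard := card_filter_dvd_eq_of_linearEquiv hp e
  have hcard_pos : (Finset.univ.filter fun i => p ∣ a i).card ≠ 0 := by
    obtain ⟨i, -, hi⟩ := hp.exists_mem_finset_dvd hpa
    exact Finset.card_ne_zero_of_mem (Finset.mem_filter.mpr ⟨Finset.mem_univ i, hi⟩)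
  have hprod := prod_eq_pow_card_mul_prod hb
  have hb0 : ∏ i, b i ≠ 0 := right_ne_zero_of_mul (hprod ▸ ha)
  have hlt : DvdNotUnit (∏ i, b i) (∏ i, a i) :=
    ⟨hb0, _, fun h => hp.not_isUnit ((isUnit_pow_iff hcard_pos).mp h), hprod.trans (mul_comm _ _)⟩
  let e' : (Π i, R ⧸ Ideal.span {b i}) ≃ₗ[R] Π j, R ⧸ Ideal.span {d j} :=
    (quotTorsionByPiQuotientEquiv fun i => hp.dvd_mul_iff_of_eq_ite_mul (hb i)).symm.trans <|
      (Quotient.equiv _ _ e (e.map_torsionBy p)).trans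
        (quotTorsionByPiQuotientEquiv fun j => hp.dvd_mul_iff_of_eq_ite_mul (hd j))
  rw [hprod, prod_eq_pow_card_mul_prod hd, hcard]
  exact (ih _ hlt e' rfl hb0).mul_left _

section Determinant
variable {M : Type*} [AddCommGroup M] [Module R M]

theorem LinearMap.associated_det_prod_smithNormalFormCoeffs {ι : Type*} [Fintype ι]
    (b : Basis ι R M) (u : M →ₗ[R] M)
    (h : finrank R (LinearMap.range u) = finrank R M) :
    Associated (LinearMap.det u) (∏ i, smithNormalFormCoeffs b h i) := by
  classical
  set b' := smithNormalFormTopBasis b h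
  set b'' := smithNormalFormBotBasis b h
  have : Module.Finite R (LinearMap.range u) := .of_basis b''
  have hinj : Function.Injective u := u.injective_rangeRestrict_iff.mp <|
    OrzechProperty.injective_of_surjective_of_injective (b'.equiv b'' (.refl ι)).toLinearMap
      u.rangeRestrict (LinearEquiv.injective _) u.surjective_rangeRestrict
  have hdiag : LinearMap.det
      ((LinearMap.range u).subtype ∘ₗ (b'.equiv b'' (.refl ι)).toLinearMap) =
        ∏ i, smithNormalFormCoeffs b h i := by
    rw [← b''.det_comp_basis b', ← mul_one (∏ i, _), ← b'.det_self, ← smul_eq_mul,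
      ← AlternatingMap.map_smul_univ]
    congr 1
    ext i
    simp [b', b'']
  rw [← hdiag]
  exact LinearMap.associated_det_comp_equiv (LinearMap.range u).subtype
    (LinearEquiv.ofInjective u hinj) _

end Determinant

end PID

theorem fitting_ideal_eq_det_general {R M : Type} [CommRing R] [IsDomain R]
    [IsPrincipalIdealRing R] [AddCommGroup M] [Module R M]
    [Module.Free R M] [Module.Finite R M]
    (n : ℕ) (hn : Module.finrank R M = n)
    (u : M →ₗ[R] M)
    (hrank : Module.finrank R (LinearMap.range u) = n)
    (ℓ : ℕ) (a : Fin ℓ → R)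
    (e : (M ⧸ LinearMap.range u) ≃ₗ[R] ((i : Fin ℓ) → R ⧸ Ideal.span {a i})) :
    Ideal.span {∏ i, a i} = Ideal.span {LinearMap.det u} := by
  have h : finrank R (LinearMap.range u) = finrank R M := hrank.trans hn.symm
  let b := Free.chooseBasis R M
  have hc : ∏ i, smithNormalFormCoeffs b h i ≠ 0 :=
    Finset.prod_ne_zero_iff.mpr fun i _ => smithNormalFormCoeffs_ne_zero b h i
  rw [Ideal.span_singleton_eq_span_singleton]
  exact (associated_prod_of_linearEquiv_pi_quotient hc
    ((quotientEquivPiSpan _ b h).symm.trans e)).symm.trans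
    (LinearMap.associated_det_prod_smithNormalFormCoeffs b u h).symm

/-- **Fitting ideal vs determinant over a PID.**
Let `R` be a PID and `M` a free `R`-module of finite rank `n`.  If `u : M → M` is an
`R`-linear endomorphism whose image is also free of rank `n`, then for any invariant
factor decomposition `M ⧸ u(M) ≅ ⊕ R/(aᵢ)` (with divisibility chain `aᵢ ∣ aᵢ₊₁`), the
Fitting ideal `(∏ aᵢ)` equals the ideal generated by `det u`. -/
theorem fitting_ideal_eq_det {R M : Type} [CommRing R] [IsDomain R]
    [IsPrincipalIdealRing R] [AddCommGroup M] [Module R M]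
    [Module.Free R M] [Module.Finite R M]
    (n : ℕ) (hn : Module.finrank R M = n)
    (u : M →ₗ[R] M)
    (hfree : Module.Free R (LinearMap.range u))
    (hrank : Module.finrank R (LinearMap.range u) = n)
    (ℓ : ℕ) (a : Fin ℓ → R)
    (hchain : ∀ i j : Fin ℓ, i ≤ j → a i ∣ a j)
    (e : (M ⧸ LinearMap.range u) ≃ₗ[R] ((i : Fin ℓ) → R ⧸ Ideal.span {a i})) :
    Ideal.span {∏ i, a i} = Ideal.span {LinearMap.det u} :=
  fitting_ideal_eq_det_general n hn u hrank ℓ a e
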